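/- Let O be a monotonous quiver all of whose vertices are phylogenetic, and let A be a regular vertex of O. Then the clade O_A of A is monotonous and every vertex of O_A is phylogenetic as a vertex of O_A. -/

import Mathlib

universe u
variable {V : Type u} [Quiver V]

/-- An evolution of length `m` with vertex sequence `A 0, A 1, ..., A m`:
for each `k < m` there is an edge from `A (k+1)` to `A k`
(the paper's evolution `A 0 ← A 1 ← ⋯ ← A m`). -/
def IsEvol (A : ℕ → V) (m : ℕ) : Prop := ∀ k < m, Nonempty (A (k + 1) ⟶ A k)

/-- `Anc X Y` : `X` is an ancestor of `Y`, i.e. there is an evolution from `X` to `Y`. -/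
def Anc (X Y : V) : Prop := ∃ (m : ℕ) (A : ℕ → V), IsEvol A m ∧ A 0 = X ∧ A m = Y

/-- `X` and `Y` are isotypic. -/
def Isotypic (X Y : V) : Prop := Anc X Y ∧ Anc Y X

/-- A vertex is primitive if every ancestor of it is isotypic to it. -/
def Primitive (X : V) : Prop := ∀ B : V, Anc B X → Anc X B

/-- A full evolution for `X` : an evolution from a primitive vertex to `X`. -/
def IsFullEvol (A : ℕ → V) (m : ℕ) (X : V) : Prop :=
  IsEvol A m ∧ Primitive (A 0) ∧ A m = X

/-- The height of a vertex: the least length of a full evolution for it (`⊤` if none). -/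
noncomputable def height (X : V) : ℕ∞ :=
  sInf {n : ℕ∞ | ∃ m : ℕ, n = (m : ℕ∞) ∧ ∃ A : ℕ → V, IsFullEvol A m X}

/-- `A` is a critical ancestor of `B`. -/
def CritAnc (A B : V) : Prop :=
  height A < ⊤ ∧ ∃ (m : ℕ) (E : ℕ → V), 0 < m ∧ IsEvol E m ∧ E 0 = A ∧ E m = B ∧
    height (E 1) = height A + 1

/-- A vertex is normal if any two of its critical ancestors of equal height are isotypic. -/
def NormalVtx (B : V) : Prop :=
  ∀ A A' : V, CritAnc A B → CritAnc A' B → height A = height A' → Isotypic A A'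

/-- The evolution `(A, m)` embeds in the evolution `(B, n)`. -/
def Embeds (A : ℕ → V) (m : ℕ) (B : ℕ → V) (n : ℕ) : Prop :=
  m ≤ n ∧ ∃ r : ℕ → ℕ, (∀ k < m, r k < r (k + 1)) ∧ r m ≤ n ∧
    ∀ k ≤ m, Isotypic (A k) (B (r k))

/-- A universal evolution for `X`: a full evolution for `X` embedding in every
full evolution for `X`. -/
def IsUniversalEvol (A : ℕ → V) (m : ℕ) (X : V) : Prop :=
  IsFullEvol A m X ∧ ∀ (B : ℕ → V) (n : ℕ), IsFullEvol B n X → Embeds A m B n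

/-- A vertex is phylogenetic if it admits a universal evolution. -/
def Phylogenetic (X : V) : Prop := ∃ (A : ℕ → V) (m : ℕ), IsUniversalEvol A m X

/-- A quiver is monotonous if `h(A) ≥ h(B)` for every edge `A → B`. -/
def Monotonous (V : Type u) [Quiver V] : Prop :=
  ∀ A B : V, Nonempty (A ⟶ B) → height B ≤ height A

/-- A vertex `A` is regular if for every descendant `B` of `A` with `h(B) = h(A)`
there is an edge `B → A`. -/
def Regular (A : V) : Prop :=
  ∀ B : V, Anc A B → height B = height A → Nonempty (B ⟶ A)

/-- The clade of a vertex `A`: the full subquiver of descendants of `A`. -/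
abbrev Clade (A : V) : Type u := {B : V // Anc A B}

instance (A : V) : Quiver (Clade A) := ⟨fun X Y => X.val ⟶ Y.val⟩

/-!
Fix universal evolutions `U X`; they are short, so `h(U X k) = k`. Let `a = h(A)` and let `B`
descend from `A`. Since `U B` embeds in every full evolution of `B` through `A`, its vertices from
index `a` on descend from `A`. A full evolution of `B` in the clade starts at a vertex of height
`a` isotypic to `A`; preceded by a short full evolution of that vertex it becomes a full evolution
of `B` in the quiver, into which `U B` embeds. Hence the tail `U B a ← ⋯ ← U B (h B)` is universal
in the clade, after prepending `A` when `U B a` is not an ancestor of `A` (regularity provides the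
edge `U B a → A`). Clade heights are therefore `h(B) - a` or `h(B) - a + 1`. For an edge `P → Q`
with `h(P) = h(Q)`, heights force the embedding of `U P` into `U Q` followed by `P` to be the
identity, so `U Q a ≤ U P a`, and monotonicity follows.
-/

section Append

variable {α : Type*} {E F : ℕ → α} {m i : ℕ}

def evolAppend (E : ℕ → α) (m : ℕ) (F : ℕ → α) : ℕ → α :=
  fun i => if i ≤ m then E i else F (i - m)

lemma evolAppend_of_le (h : i ≤ m) : evolAppend E m F i = E i :=
  if_pos h

lemma evolAppend_of_ge (hEF : E m = F 0) (h : m ≤ i) : evolAppend E m F i = F (i - m) := by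
  rcases h.eq_or_lt with rfl | h
  · simpa [evolAppend] using hEF
  · exact if_neg (by omega)

end Append

section Evolutions

variable {E F : ℕ → V} {m n i j k : ℕ} {X Y Z : V}

lemma IsEvol.mono (h : IsEvol E m) (hk : k ≤ m) : IsEvol E k :=
  fun j hj => h j (by omega)

lemma IsEvol.drop (h : IsEvol E m) (a : ℕ) : IsEvol (fun k => E (a + k)) (m - a) :=
  fun k hk => h (a + k) (by omega)

lemma IsEvol.anc (h : IsEvol E m) (hij : i ≤ j) (hj : j ≤ m) : Anc (E i) (E j) :=
  ⟨j - i, fun k => E (i + k), (h.drop i).mono (by omega), rfl,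
    show E (i + (j - i)) = E j by rw [Nat.add_sub_cancel' hij]⟩

lemma Anc.refl (X : V) : Anc X X :=
  ⟨0, fun _ => X, fun _ hk => absurd hk (Nat.not_lt_zero _), rfl, rfl⟩

lemma anc_of_hom (e : Nonempty (X ⟶ Y)) : Anc Y X :=
  ⟨1, fun k => if k = 0 then Y else X,
    fun k hk => by obtain rfl : k = 0 := (by omega); simpa using e, rfl, rfl⟩

lemma IsEvol.append (hE : IsEvol E m) (hF : IsEvol F n) (hEF : E m = F 0) :
    IsEvol (evolAppend E m F) (m + n) := by
  intro k hk
  by_cases hkm : k + 1 ≤ m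
  · rw [evolAppend_of_le hkm, evolAppend_of_le (by omega)]
    exact hE k (by omega)
  · rw [evolAppend_of_ge hEF (by omega), evolAppend_of_ge hEF (by omega),
      show k + 1 - m = k - m + 1 by omega]
    exact hF (k - m) (by omega)

lemma Anc.trans (hXY : Anc X Y) (hYZ : Anc Y Z) : Anc X Z := by
  obtain ⟨m, E, hE, rfl, rfl⟩ := hXY
  obtain ⟨n, F, hF, hF0, rfl⟩ := hYZ
  exact ⟨m + n, evolAppend E m F, hE.append hF hF0.symm, evolAppend_of_le (Nat.zero_le m),
    by rw [evolAppend_of_ge hF0.symm (by omega), Nat.add_sub_cancel_left]⟩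

lemma Isotypic.symm (h : Isotypic X Y) : Isotypic Y X :=
  ⟨h.2, h.1⟩

lemma IsFullEvol.append (hE : IsFullEvol E m Y) (hF : IsEvol F n) (hF0 : F 0 = Y) :
    IsFullEvol (evolAppend E m F) (m + n) (F n) := by
  have hEF : E m = F 0 := hE.2.2.trans hF0.symm
  exact ⟨hE.1.append hF hEF, by rw [evolAppend_of_le (Nat.zero_le m)]; exact hE.2.1,
    by rw [evolAppend_of_ge hEF (by omega), Nat.add_sub_cancel_left]⟩

lemma IsFullEvol.update (hE : IsFullEvol E m Y) (e : Nonempty (X ⟶ Y)) :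
    IsFullEvol (Function.update E (m + 1) X) (m + 1) X := by
  refine ⟨fun k hk => ?_, ?_, Function.update_self _ _ _⟩
  · rw [Function.update_of_ne (by omega : k ≠ m + 1)]
    rcases (Nat.lt_succ_iff.1 hk).eq_or_lt with rfl | hkm
    · rw [Function.update_self, hE.2.2]
      exact e
    · rw [Function.update_of_ne (by omega)]
      exact hE.1 k hkm
  · rw [Function.update_of_ne (by omega)]
    exact hE.2.1

end Evolutions

section Heights

variable {E F : ℕ → V} {m n k : ℕ} {X : V}

lemma height_le_of_isFullEvol (h : IsFullEvol E m X) : height X ≤ m :=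
  sInf_le ⟨m, rfl, E, h⟩

lemma exists_isFullEvol_of_height_eq (h : height X = n) : ∃ E, IsFullEvol E n X := by
  have hS : {n : ℕ∞ | ∃ m : ℕ, n = m ∧ ∃ A : ℕ → V, IsFullEvol A m X}.Nonempty := by
    refine Set.nonempty_iff_ne_empty.2 fun hS => ?_
    rw [height, hS, sInf_empty] at h
    exact ENat.top_ne_natCast n h
  obtain ⟨m, hm, E, hE⟩ := csInf_mem hS
  obtain rfl : m = n := by exact_mod_cast hm.symm.trans h
  exact ⟨E, hE⟩

lemma IsFullEvol.exists_isFullEvol_height (hE : IsFullEvol E m X) :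
    ∃ n : ℕ, height X = n ∧ ∃ F, IsFullEvol F n X := by
  obtain ⟨n, hn⟩ := ENat.ne_top_iff_exists.1
    (ne_top_of_le_ne_top (ENat.natCast_ne_top m) (height_le_of_isFullEvol hE))
  exact ⟨n, hn.symm, exists_isFullEvol_of_height_eq hn.symm⟩

lemma IsUniversalEvol.height_eq (hU : IsUniversalEvol E m X) : height X = m := by
  obtain ⟨n, hn, F, hF⟩ := hU.1.exists_isFullEvol_height
  have hnm := height_le_of_isFullEvol hU.1
  rw [hn, Nat.cast_le] at hnm
  rw [hn, le_antisymm hnm (hU.2 F n hF).1]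

lemma IsFullEvol.height_apply (hE : IsFullEvol E m X) (hm : height X = m) (hk : k ≤ m) :
    height (E k) = k := by
  have hpre : IsFullEvol E k (E k) := ⟨hE.1.mono hk, hE.2.1, rfl⟩
  obtain ⟨n, hn, F, hF⟩ := hpre.exists_isFullEvol_height
  have hnk := height_le_of_isFullEvol hpre
  have hlong := height_le_of_isFullEvol (hF.append (hE.1.drop k) (by simp))
  rw [Nat.add_sub_cancel' hk, hE.2.2, hm, Nat.cast_le] at hlong
  rw [hn, Nat.cast_le] at hnk
  rw [hn, Nat.cast_inj]
  omega

end Heights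

def EmbedsVia (r : ℕ → ℕ) (E : ℕ → V) (m : ℕ) (F : ℕ → V) (n : ℕ) : Prop :=
  (∀ k < m, r k < r (k + 1)) ∧ r m ≤ n ∧ ∀ k ≤ m, Isotypic (E k) (F (r k))

section Embeddings

variable {r : ℕ → ℕ} {E F G : ℕ → V} {m n a b i j k : ℕ} {X Y P Q : V}

lemma EmbedsVia.add_sub_le (h : EmbedsVia r E m F n) (hij : i ≤ j) (hj : j ≤ m) :
    r i + (j - i) ≤ r j := by
  induction j, hij using Nat.le_induction with
  | base => simp
  | succ j hij ih =>
    have := h.1 j (by omega)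
    have := ih (by omega)
    omega

lemma EmbedsVia.le_apply (h : EmbedsVia r E m F n) (hk : k ≤ m) : k ≤ r k := by
  have := h.add_sub_le (Nat.zero_le k) hk
  omega

lemma embeds_iff_exists_embedsVia : Embeds E m F n ↔ ∃ r, EmbedsVia r E m F n :=
  ⟨fun ⟨_, r, hr⟩ => ⟨r, hr⟩, fun ⟨r, hr⟩ => ⟨(hr.le_apply le_rfl).trans hr.2.1, r, hr⟩⟩

lemma EmbedsVia.drop (h : EmbedsVia r E m F n) (ha : a ≤ m) (hb : b ≤ r a) :
    EmbedsVia (fun k => r (a + k) - b) (fun k => E (a + k)) (m - a) (fun k => F (b + k))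
      (n - b) := by
  have hrb : ∀ k ≤ m - a, b ≤ r (a + k) := fun k hk =>
    hb.trans (by have := h.add_sub_le (Nat.le_add_right a k) (by omega); omega)
  refine ⟨fun k hk => ?_, ?_, fun k hk => ?_⟩
  · show r (a + k) - b < r (a + k + 1) - b
    have := h.1 (a + k) (by omega)
    have := hrb k hk.le
    omega
  · show r (a + (m - a)) - b ≤ n - b
    have := h.2.1
    rw [Nat.add_sub_cancel' ha]
    omega
  · show Isotypic (E (a + k)) (F (b + (r (a + k) - b)))
    rw [Nat.add_sub_cancel' (hrb k hk)]
    exact h.2.2 _ (by omega)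

lemma EmbedsVia.cons (h : EmbedsVia r E m F n) (hr : 0 < r 0) (hX : Isotypic X (F 0)) :
    EmbedsVia (Stream'.cons 0 r) (Stream'.cons X E) (m + 1) F n := by
  refine ⟨fun k hk => ?_, h.2.1, fun k hk => ?_⟩
  · cases k with
    | zero => exact hr
    | succ k => exact h.1 k (by omega)
  · cases k with
    | zero => exact hX
    | succ k => exact h.2.2 k (by omega)

lemma IsUniversalEvol.anc_apply (hU : IsUniversalEvol E m X) (hF : IsFullEvol F a Y)
    (hYX : Anc Y X) (hak : a ≤ k) (hkm : k ≤ m) : Anc Y (E k) := by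
  obtain ⟨ℓ, D, hD, hD0, rfl⟩ := hYX
  have hC := hF.append hD hD0
  obtain ⟨r, hr⟩ := embeds_iff_exists_embedsVia.1 (hU.2 _ _ hC)
  have hCa : evolAppend F a D a = Y := by rw [evolAppend_of_le le_rfl, hF.2.2]
  have hrk : r k ≤ a + ℓ := by
    have := hr.add_sub_le hkm le_rfl
    have := hr.2.1
    omega
  exact hCa ▸ (hC.1.anc (hak.trans (hr.le_apply hkm)) hrk).trans (hr.2.2 k hkm).2

/-- `E` embeds in the full evolution `F ++ G` of `X`; its part from index `a` on lands in `G`. -/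
lemma IsUniversalEvol.exists_embedsVia_drop (hU : IsUniversalEvol E m X)
    (hF : IsFullEvol F a (G 0)) (hG : IsEvol G n) (hGn : G n = X) (ham : a ≤ m) :
    ∃ s, EmbedsVia s (fun k => E (a + k)) (m - a) G n ∧ (s 0 = 0 → Isotypic (E a) (G 0)) := by
  subst hGn
  obtain ⟨r, hr⟩ := embeds_iff_exists_embedsVia.1 (hU.2 _ _ (hF.append hG rfl))
  have hdrop := hr.drop ham (hr.le_apply ham)
  have hFG : F a = G 0 := hF.2.2
  have hC : (fun k => evolAppend F a G (a + k)) = G :=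
    funext fun k => by rw [evolAppend_of_ge hFG (by omega), Nat.add_sub_cancel_left]
  rw [hC, Nat.add_sub_cancel_left] at hdrop
  refine ⟨_, hdrop, fun h0 => ?_⟩
  have hra : r a = a := by
    have := hr.le_apply ham
    simp only [Nat.add_zero] at h0
    omega
  have := hr.2.2 a ham
  rwa [hra, evolAppend_of_le le_rfl, hFG] at this

lemma height_le_of_anc (hmon : Monotonous V) (h : Anc X Y) : height X ≤ height Y := by
  obtain ⟨m, E, hE, rfl, rfl⟩ := h
  induction m with
  | zero => exact le_rfl
  | succ m ih => exact (ih (hE.mono m.le_succ)).trans (hmon _ _ (hE m m.lt_succ_self))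

lemma Isotypic.height_eq (hmon : Monotonous V) (h : Isotypic X Y) : height X = height Y :=
  le_antisymm (height_le_of_anc hmon h.1) (height_le_of_anc hmon h.2)

/-- Heights force the embedding of `E` into `F ++ P` to be the identity below index `m`. -/
lemma IsUniversalEvol.anc_apply_of_hom (hmon : Monotonous V) (hP : IsUniversalEvol E m P)
    (hQ : IsUniversalEvol F m Q) (e : Nonempty (P ⟶ Q)) (hk : k ≤ m) : Anc (F k) (E k) := by
  obtain ⟨r, hr⟩ := embeds_iff_exists_embedsVia.1 (hP.2 _ _ (hQ.1.update e))
  have hiso := hr.2.2 k hk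
  by_cases hrm : r k ≤ m
  · rw [Function.update_of_ne (by omega)] at hiso
    have hrk := hiso.height_eq hmon
    rw [hP.1.height_apply hP.height_eq hk, hQ.1.height_apply hQ.height_eq hrm,
      Nat.cast_inj] at hrk
    rw [← hrk] at hiso
    exact hiso.2
  · obtain rfl : k = m := by
      have := hr.add_sub_le hk le_rfl
      have := hr.2.1
      omega
    rw [hP.1.2.2, hQ.1.2.2]
    exact anc_of_hom e

end Embeddings

namespace Clade

variable {A : V} {E : ℕ → V} {m : ℕ}

open Classical in
/-- Off the clade of `A` the value is the junk value `A`. -/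
noncomputable def lift (A : V) (E : ℕ → V) : ℕ → Clade A :=
  fun k => if h : Anc A (E k) then ⟨E k, h⟩ else ⟨A, Anc.refl A⟩

lemma lift_val {k : ℕ} (h : Anc A (E k)) : (lift A E k).val = E k := by
  simp [lift, h]

lemma isEvol_lift (hE : IsEvol E m) (hA : ∀ k ≤ m, Anc A (E k)) : IsEvol (lift A E) m :=
  fun k hk => by
    show Nonempty ((lift A E (k + 1)).val ⟶ (lift A E k).val)
    rw [lift_val (hA _ hk), lift_val (hA _ hk.le)]
    exact hE k hk

lemma anc_iff {X Y : Clade A} : Anc X Y ↔ Anc X.val Y.val := by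
  constructor
  · rintro ⟨m, E, hE, rfl, rfl⟩
    exact ⟨m, fun k => (E k).val, hE, rfl, rfl⟩
  · rintro ⟨m, E, hE, hE0, hEm⟩
    have hA : ∀ k ≤ m, Anc A (E k) := fun k hk =>
      X.2.trans (hE0 ▸ hE.anc (Nat.zero_le k) hk)
    exact ⟨m, lift A E, isEvol_lift hE hA,
      Subtype.ext (by rw [lift_val (hA 0 (Nat.zero_le m)), hE0]),
      Subtype.ext (by rw [lift_val (hA m le_rfl), hEm])⟩

lemma isotypic_iff {X Y : Clade A} : Isotypic X Y ↔ Isotypic X.val Y.val :=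
  and_congr anc_iff anc_iff

lemma primitive_iff (C : Clade A) : Primitive C ↔ Anc C.val A :=
  ⟨fun h => anc_iff.1 (h ⟨A, Anc.refl A⟩ (anc_iff.2 C.2)),
    fun h D _ => anc_iff.2 (h.trans D.2)⟩

lemma isUniversalEvol_lift {B : Clade A} (hE : IsEvol E m) (hA : ∀ k ≤ m, Anc A (E k))
    (h0 : Anc (E 0) A) (hm : E m = B.val)
    (huniv : ∀ G n, IsEvol G n → Isotypic (G 0) A → G n = B.val → Embeds E m G n) :
    IsUniversalEvol (lift A E) m B := by
  refine ⟨⟨isEvol_lift hE hA, (primitive_iff _).2 ?_, Subtype.ext ?_⟩, fun G n hG => ?_⟩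
  · rwa [lift_val (hA 0 (Nat.zero_le m))]
  · rw [lift_val (hA m le_rfl), hm]
  · obtain ⟨hmn, r, hr, hrn, hiso⟩ := huniv (fun k => (G k).val) n hG.1
      ⟨(primitive_iff _).1 hG.2.1, (G 0).2⟩ (congrArg Subtype.val hG.2.2)
    exact ⟨hmn, r, hr, hrn, fun k hk =>
      isotypic_iff.2 (by rw [lift_val (hA k hk)]; exact hiso k hk)⟩

section Universal

variable {a : ℕ} {B : Clade A}

lemma le_of_isUniversalEvol (hmon : Monotonous V) (ha : height A = a)
    (hU : IsUniversalEvol E m B.val) : a ≤ m := by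
  have := height_le_of_anc hmon B.2
  rwa [ha, hU.height_eq, Nat.cast_le] at this

lemma anc_add_of_isUniversalEvol (hmon : Monotonous V) (ha : height A = a)
    (hU : IsUniversalEvol E m B.val) {k : ℕ} (hk : k ≤ m - a) : Anc A (E (a + k)) := by
  obtain ⟨F, hF⟩ := exists_isFullEvol_of_height_eq ha
  have := le_of_isUniversalEvol hmon ha hU
  exact hU.anc_apply hF B.2 (by omega) (by omega)

lemma exists_embedsVia_drop_of_isotypic (hmon : Monotonous V) (ha : height A = a)
    (hU : IsUniversalEvol E m B.val) {G : ℕ → V} {n : ℕ} (hG : IsEvol G n)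
    (hG0 : Isotypic (G 0) A) (hGn : G n = B.val) :
    ∃ s, EmbedsVia s (fun k => E (a + k)) (m - a) G n ∧ (s 0 = 0 → Isotypic (E a) (G 0)) := by
  obtain ⟨F, hF⟩ := exists_isFullEvol_of_height_eq ((hG0.height_eq hmon).trans ha)
  exact hU.exists_embedsVia_drop hF hG hGn (le_of_isUniversalEvol hmon ha hU)

lemma isUniversalEvol_lift_drop (hmon : Monotonous V) (ha : height A = a)
    (hU : IsUniversalEvol E m B.val) (hEa : Anc (E a) A) :
    IsUniversalEvol (lift A fun k => E (a + k)) (m - a) B := by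
  have ham := le_of_isUniversalEvol hmon ha hU
  refine isUniversalEvol_lift (hU.1.1.drop a) (fun k => anc_add_of_isUniversalEvol hmon ha hU)
    hEa (by rw [Nat.add_sub_cancel' ham]; exact hU.1.2.2) fun G n hG hG0 hGn => ?_
  obtain ⟨s, hs, -⟩ := exists_embedsVia_drop_of_isotypic hmon ha hU hG hG0 hGn
  exact embeds_iff_exists_embedsVia.2 ⟨s, hs⟩

/-- Regularity supplies the edge `E a → A` that is prepended. -/
lemma isUniversalEvol_lift_cons (hmon : Monotonous V) (hA : Regular A) (ha : height A = a)
    (hU : IsUniversalEvol E m B.val) (hEa : ¬Anc (E a) A) :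
    IsUniversalEvol (lift A (Stream'.cons A fun k => E (a + k))) (m - a + 1) B := by
  have ham := le_of_isUniversalEvol hmon ha hU
  have hA' : ∀ k ≤ m - a + 1, Anc A (Stream'.cons A (fun k => E (a + k)) k)
    | 0, _ => Anc.refl A
    | k + 1, hk => anc_add_of_isUniversalEvol hmon ha hU (by omega)
  have hedge : Nonempty (E a ⟶ A) := hA _ (hA' 1 (by omega))
    (by rw [hU.1.height_apply hU.height_eq ham, ha])
  refine isUniversalEvol_lift (fun k hk => ?_) hA' (Anc.refl A)
    (by show E (a + (m - a)) = B.val; rw [Nat.add_sub_cancel' ham]; exact hU.1.2.2)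
    fun G n hG hG0 hGn => ?_
  · cases k with
    | zero => exact hedge
    | succ k => exact hU.1.1.drop a k (by omega)
  · obtain ⟨s, hs, hs0⟩ := exists_embedsVia_drop_of_isotypic hmon ha hU hG hG0 hGn
    have hpos : 0 < s 0 := Nat.pos_of_ne_zero fun h0 => hEa ((hs0 h0).1.trans hG0.1)
    exact embeds_iff_exists_embedsVia.2 ⟨_, hs.cons hpos hG0.symm⟩

end Universal

end Clade

theorem stmt_18 (hmon : Monotonous V) (hphy : ∀ X : V, Phylogenetic X)
    (A : V) (hA : Regular A) :
    Monotonous (Clade A) ∧ ∀ B : Clade A, Phylogenetic B := by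
  classical
  choose U M hU using hphy
  have hM : ∀ X, height X = M X := fun X => (hU X).height_eq
  let ε : V → ℕ := fun B => if Anc (U B (M A)) A then 0 else 1
  have hclade : ∀ B : Clade A, ∃ W, IsUniversalEvol W (M B - M A + ε B) B := by
    intro B
    by_cases hB : Anc (U B (M A)) A
    · simpa [ε, hB] using ⟨_, Clade.isUniversalEvol_lift_drop hmon (hM A) (hU B) hB⟩
    · simpa [ε, hB] using ⟨_, Clade.isUniversalEvol_lift_cons hmon hA (hM A) (hU B) hB⟩
  refine ⟨fun P Q e => ?_, fun B => (hclade B).imp fun W hW => ⟨_, hW⟩⟩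
  obtain ⟨WP, hWP⟩ := hclade P
  obtain ⟨WQ, hWQ⟩ := hclade Q
  rw [hWP.height_eq, hWQ.height_eq, Nat.cast_le]
  have hQP : M Q ≤ M P := by exact_mod_cast hM Q ▸ hM P ▸ hmon _ _ e
  have haP := Clade.le_of_isUniversalEvol hmon (hM A) (hU P)
  have haQ := Clade.le_of_isUniversalEvol hmon (hM A) (hU Q)
  have hε : M Q = M P → ε P = 0 → ε Q = 0 := fun hPQ hεP => by
    simp only [ε, ite_eq_left_iff, one_ne_zero, imp_false, not_not] at hεP ⊢
    exact ((hU P).anc_apply_of_hom hmon (hPQ ▸ hU Q) e haP).trans hεP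
  have hε1 : ∀ B, ε B ≤ 1 := fun B => by simp only [ε]; split_ifs <;> omega
  have := hε1 P
  have := hε1 Q
  omega
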